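/- arXiv:1401.8049 — 3 statements merged into one kernel-verified Lean document; each statement's English description precedes it below -/
import Mathlib

section
/- Let (P_j)_{j≥0} be a strictly decreasing sequence of positive reals, γ > 0, and suppose vectors U^n in a Hilbert space satisfy, for all n ≥ 0, P_0 ‖U^{n+1}‖ ≤ Σ_{j=0}^{n-1} (P_j - P_{j+1}) ‖U^{n-j}‖ + P_n ‖U^0‖ + γ M, where M ≥ 0. If moreover c is a constant with c P_n ≥ γ for all n ≤ N, then for all 1 ≤ n ≤ N+1: ‖U^n‖ ≤ ‖U^0‖ + c M. -/
open Finset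

/- Set `B = ‖U⁰‖ + cM` and argue by strong induction. If all earlier terms are at most `B`, the
weights `P_j - P_{j+1}` are nonnegative and telescope to `P_0 - P_n`, so the right-hand side of the
recursion is at most `(P_0 - P_n) B + P_n ‖U⁰‖ + P_n c M = P_0 B`; dividing by `P_0 > 0` gives the
bound for the next term. -/

lemma sum_range_antitone_diff_mul_le {P a : ℕ → ℝ} {B : ℝ} {n : ℕ} (hP : Antitone P)
    (ha : ∀ j < n, a (n - j) ≤ B) :
    ∑ j ∈ range n, (P j - P (j + 1)) * a (n - j) ≤ (P 0 - P n) * B :=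
  calc ∑ j ∈ range n, (P j - P (j + 1)) * a (n - j)
      ≤ ∑ j ∈ range n, (P j - P (j + 1)) * B := by
        refine sum_le_sum fun j hj => mul_le_mul_of_nonneg_left (ha j (mem_range.mp hj)) ?_
        exact sub_nonneg.mpr (hP j.le_succ)
    _ = (P 0 - P n) * B := by rw [← sum_mul, sum_range_sub']

theorem le_add_of_le_weighted_history {P a : ℕ → ℝ} {F K : ℝ} {N : ℕ}
    (hP0 : 0 < P 0) (hP : Antitone P)
    (hrec : ∀ n, P 0 * a (n + 1) ≤ ∑ j ∈ range n, (P j - P (j + 1)) * a (n - j) + P n * a 0 + F)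
    (hF : ∀ n ≤ N, F ≤ P n * K) :
    ∀ n, 1 ≤ n → n ≤ N + 1 → a n ≤ a 0 + K := by
  intro n
  induction n using Nat.strong_induction_on with
  | _ n ih =>
    intro hn1 hnN
    obtain ⟨m, rfl⟩ : ∃ m, n = m + 1 := ⟨n - 1, by omega⟩
    have hhist : ∑ j ∈ range m, (P j - P (j + 1)) * a (m - j) ≤ (P 0 - P m) * (a 0 + K) :=
      sum_range_antitone_diff_mul_le hP fun j hj => ih (m - j) (by omega) (by omega) (by omega)
    have hstep : P 0 * a (m + 1) ≤ P 0 * (a 0 + K) := by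
      linarith [hrec m, hF m (by omega)]
    exact le_of_mul_le_mul_left hstep hP0

theorem stmt_13_general {H : Type*} [NormedAddCommGroup H]
    (P : ℕ → ℝ) (hPpos : ∀ j, 0 < P j) (hPanti : StrictAnti P)
    (γ : ℝ) (M : ℝ) (hM : 0 ≤ M)
    (U : ℕ → H)
    (hrec : ∀ n : ℕ, P 0 * ‖U (n + 1)‖ ≤
      (∑ j ∈ Finset.range n, (P j - P (j + 1)) * ‖U (n - j)‖) + P n * ‖U 0‖ + γ * M)
    (N : ℕ) (c : ℝ) (hc : ∀ n ≤ N, γ ≤ c * P n) :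
    ∀ n, 1 ≤ n → n ≤ N + 1 → ‖U n‖ ≤ ‖U 0‖ + c * M := by
  refine le_add_of_le_weighted_history (hPpos 0) hPanti.antitone hrec fun n hn => ?_
  calc γ * M ≤ c * P n * M := mul_le_mul_of_nonneg_right (hc n hn) hM
    _ = P n * (c * M) := by ring

theorem stmt_13 {H : Type*} [NormedAddCommGroup H] [InnerProductSpace ℝ H]
    (P : ℕ → ℝ) (hPpos : ∀ j, 0 < P j) (hPanti : StrictAnti P)
    (γ : ℝ) (hγ : 0 < γ) (M : ℝ) (hM : 0 ≤ M)
    (U : ℕ → H)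
    (hrec : ∀ n : ℕ, P 0 * ‖U (n + 1)‖ ≤
      (∑ j ∈ Finset.range n, (P j - P (j + 1)) * ‖U (n - j)‖) + P n * ‖U 0‖ + γ * M)
    (N : ℕ) (c : ℝ) (hc : ∀ n ≤ N, γ ≤ c * P n) :
    ∀ n, 1 ≤ n → n ≤ N + 1 → ‖U n‖ ≤ ‖U 0‖ + c * M :=
  stmt_13_general P hPpos hPanti γ M hM U hrec N c hc
end

section
/- Let 0<β_i<1 and β_0 > 0, and z_1,…,z_m ∈ ℂ. Then 1/Γ(β_0) + Σ_{i=1}^m z_i E_{(β_1,…,β_m),β_0+β_i}(z_1,…,z_m) = E_{(β_1,…,β_m),β_0}(z_1,…,z_m), where E denotes the multinomial Mittag-Leffler function. -/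
/-!
Write `T_c(l) = multinomial(l) z^l / Γ(c + Σ β_i l_i)` for the terms of `E_{β,c}`. From
`(l_i + 1) multinomial(l + e_i) = (|l| + 1) multinomial(l)` one gets
`z_i T_{c+β_i}(l) = (l'_i / |l'|) T_c(l')` with `l' = l + e_i`. Summing over `l` and then over `i`,
the weights `l'_i / |l'|` add up to one, so every term of `E_{β,c}` is recovered except
`T_c(0) = 1 / Γ(c)`.

The rearrangement needs absolute convergence. For any `t ≥ 1`, `1 / Γ(x) ≤ 6 e^t t^(2 - x)` and
`multinomial(l) ≤ m^|l|`, so the series is dominated by a product of geometric series with ratios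
`m |z_i| / t^β_i`, which are `< 1` once `t` is large.
-/

open Finset

/-- The multinomial Mittag-Leffler function, defined by summing over all
multi-indices `l : Fin m → ℕ`. -/
noncomputable def mML (m : ℕ) (β : Fin m → ℝ) (β₀ : ℝ) (z : Fin m → ℂ) : ℂ :=
  ∑' l : Fin m → ℕ,
    ((Nat.multinomial Finset.univ l : ℕ) : ℂ) * (∏ i, z i ^ l i) /
      Complex.Gamma (((β₀ + ∑ i, β i * l i : ℝ)) : ℂ)

namespace Real

lemma one_sixth_le_Gamma {x : ℝ} (hx : 0 < x) (hx2 : x ≤ 2) : 1 / 6 ≤ Gamma x := by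
  have hG := Gamma_pos_of_pos hx
  have h2 : 1 ≤ Gamma (x + 2) := by
    rw [← Gamma_two]
    exact Gamma_strictMonoOn_Ici.monotoneOn (Set.mem_Ici.2 le_rfl)
      (Set.mem_Ici.2 (by linarith)) (by linarith)
  have hrec : Gamma (x + 2) = (x + 1) * x * Gamma x := by
    rw [show x + 2 = x + 1 + 1 by ring, Gamma_add_one (by positivity),
      Gamma_add_one hx.ne', mul_assoc]
  have hx6 : (x + 1) * x ≤ 6 := by nlinarith
  nlinarith [mul_le_mul_of_nonneg_right hx6 hG.le]

lemma rpow_sub_two_le_exp_mul_Gamma {t x : ℝ} (ht : 1 ≤ t) (hx : 2 ≤ x) :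
    t ^ (x - 2) ≤ exp t * Gamma x := by
  set k := ⌊x - 1⌋₊
  have hk : (k : ℝ) ≤ x - 1 := Nat.floor_le (by linarith)
  have hk1 : 1 ≤ k := Nat.le_floor (by norm_num; linarith)
  calc t ^ (x - 2) ≤ t ^ (k : ℝ) := by
        apply rpow_le_rpow_of_exponent_le ht
        linarith [Nat.lt_floor_add_one (x - 1)]
    _ = t ^ k := rpow_natCast t k
    _ ≤ exp t * k.factorial := by
        have := pow_div_factorial_le_exp t (by linarith) k
        rwa [div_le_iff₀ (by positivity)] at this
    _ = exp t * Gamma (k + 1) := by rw [Gamma_nat_eq_factorial]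
    _ ≤ exp t * Gamma x := by
        gcongr
        exact Gamma_strictMonoOn_Ici.monotoneOn
          (Set.mem_Ici.2 (by exact_mod_cast Nat.succ_le_succ hk1)) (Set.mem_Ici.2 hx) (by linarith)

lemma one_div_Gamma_le {t x : ℝ} (ht : 1 ≤ t) (hx : 0 < x) :
    1 / Gamma x ≤ 6 * exp t * t ^ (2 - x) := by
  have hG := Gamma_pos_of_pos hx
  have het : 1 ≤ exp t := by linarith [add_one_le_exp t]
  rcases le_or_gt x 2 with hx2 | hx2
  · have htx : 1 ≤ t ^ (2 - x) := one_le_rpow ht (by linarith)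
    calc 1 / Gamma x ≤ 6 := by
          rw [div_le_iff₀ hG]; linarith [one_sixth_le_Gamma hx hx2]
      _ ≤ 6 * exp t * t ^ (2 - x) := by nlinarith
  · have htx : 0 < t ^ (x - 2) := rpow_pos_of_pos (by linarith) _
    calc 1 / Gamma x ≤ exp t / t ^ (x - 2) := by
          rw [div_le_div_iff₀ hG htx]
          linarith [rpow_sub_two_le_exp_mul_Gamma ht hx2.le]
      _ = exp t * t ^ (2 - x) := by
          rw [div_eq_mul_inv, ← rpow_neg (by linarith), neg_sub]
      _ ≤ 6 * exp t * t ^ (2 - x) := by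
          have : 0 ≤ exp t * t ^ (2 - x) := by positivity
          linarith

end Real

namespace Nat

lemma multinomial_univ_le_card_pow {α : Type*} [Fintype α] (f : α → ℕ) :
    multinomial univ f ≤ Fintype.card α ^ ∑ i, f i := by
  classical
  have hmem : f ∈ piAntidiag univ (∑ i, f i) :=
    mem_piAntidiag.2 ⟨rfl, fun i _ => mem_univ i⟩
  calc multinomial univ f ≤ ∑ g ∈ piAntidiag univ (∑ i, f i), multinomial univ g :=
        single_le_sum (fun _ _ => Nat.zero_le _) hmem
    _ = Fintype.card α ^ ∑ i, f i := by
        simpa using (sum_pow_eq_sum_piAntidiag (R := ℕ) univ (fun _ => 1) (∑ i, f i)).symm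

lemma succ_mul_multinomial_add_single {α : Type*} [DecidableEq α] {s : Finset α} {a : α}
    (ha : a ∈ s) (f : α → ℕ) :
    (f a + 1) * multinomial s (f + Pi.single a 1) = (∑ i ∈ s, f i + 1) * multinomial s f := by
  have hsum : ∑ i ∈ s, (f + Pi.single a 1 : α → ℕ) i = ∑ i ∈ s, f i + 1 := by
    simp [sum_add_distrib, ha]
  have hprod :
      ∏ i ∈ s, ((f + Pi.single a 1 : α → ℕ) i)! = (f a + 1) * ∏ i ∈ s, (f i)! := by
    rw [← mul_prod_erase _ _ ha, ← mul_prod_erase _ _ ha, ← mul_assoc]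
    congr 1
    · simp [factorial_succ]
    · exact prod_congr rfl fun i hi => by simp [ne_of_mem_erase hi]
  have h := multinomial_spec s (f + Pi.single a 1)
  rw [hsum, hprod, factorial_succ, ← multinomial_spec s f] at h
  have hpos : 0 < ∏ i ∈ s, (f i)! := prod_pos fun i _ => factorial_pos _
  apply Nat.eq_of_mul_eq_mul_left hpos
  linarith [h]

end Nat

lemma summable_fin_prod_of_nonneg {ι : Type*} {m : ℕ} {f : Fin m → ι → ℝ}
    (hf0 : ∀ i b, 0 ≤ f i b) (hf : ∀ i, Summable (f i)) :
    Summable fun l : Fin m → ι => ∏ i, f i (l i) := by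
  induction m with
  | zero => simpa using Summable.of_finite
  | succ n ih =>
    rw [← (Fin.consEquiv fun _ => ι).summable_iff]
    simpa [Function.comp_def, Fin.consEquiv, Fin.prod_univ_succ] using
      (hf 0).mul_of_nonneg (ih (fun i => hf0 i.succ) fun i => hf i.succ) (hf0 0)
        fun l => prod_nonneg fun i _ => hf0 i.succ (l i)

section MittagLefflerSeries

variable {m : ℕ} (β : Fin m → ℝ) (c : ℝ) (z : Fin m → ℂ)

noncomputable def mMLTerm (l : Fin m → ℕ) : ℂ :=
  ((Nat.multinomial univ l : ℕ) : ℂ) * (∏ i, z i ^ l i) /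
    Complex.Gamma ((c + ∑ i, β i * l i : ℝ) : ℂ)

lemma mML_eq_tsum_mMLTerm : mML m β c z = ∑' l, mMLTerm β c z l := rfl

lemma mMLTerm_zero : mMLTerm β c z 0 = 1 / Complex.Gamma c := by
  simp [mMLTerm, Nat.multinomial]

lemma norm_mMLTerm_le (hβ : ∀ i, 0 < β i) (hc : 0 < c) {t : ℝ} (ht : 1 ≤ t)
    (l : Fin m → ℕ) :
    ‖mMLTerm β c z l‖ ≤
      6 * Real.exp t * t ^ (2 - c) * ∏ i, (m * ‖z i‖ / t ^ β i) ^ l i := by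
  set s := ∑ i, β i * l i
  have hx : 0 < c + s := add_pos_of_pos_of_nonneg hc (sum_nonneg fun i _ => by
    have := hβ i; positivity)
  have ht0 : 0 < t := by linarith
  have hnorm : ‖mMLTerm β c z l‖ =
      (Nat.multinomial univ l : ℝ) * (∏ i, ‖z i‖ ^ l i) * (1 / Real.Gamma (c + s)) := by
    rw [mMLTerm, norm_div, norm_mul, Complex.Gamma_ofReal,
      Complex.norm_of_nonneg (Real.Gamma_pos_of_pos hx).le, norm_prod]
    simp [norm_pow, div_eq_mul_inv]
  have hM : (Nat.multinomial univ l : ℝ) ≤ ∏ i, (m : ℝ) ^ l i := by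
    rw [prod_pow_eq_pow_sum]
    exact_mod_cast (Fintype.card_fin m) ▸ Nat.multinomial_univ_le_card_pow l
  have hpow : t ^ (2 - (c + s)) = t ^ (2 - c) / ∏ i, (t ^ β i) ^ l i := by
    simp only [← Real.rpow_mul_natCast ht0.le, ← Real.rpow_sum_of_pos ht0, sub_add_eq_sub_sub,
      Real.rpow_sub ht0]
    rfl
  calc ‖mMLTerm β c z l‖
      ≤ (∏ i, (m : ℝ) ^ l i) * (∏ i, ‖z i‖ ^ l i) *
          (6 * Real.exp t * t ^ (2 - (c + s))) := by
        rw [hnorm]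
        gcongr
        exact Real.one_div_Gamma_le ht hx
    _ = 6 * Real.exp t * t ^ (2 - c) * ∏ i, (m * ‖z i‖ / t ^ β i) ^ l i := by
        rw [hpow]
        simp only [div_pow, mul_pow, prod_div_distrib, prod_mul_distrib]
        ring

lemma summable_mMLTerm (hβ : ∀ i, 0 < β i) (hc : 0 < c) : Summable (mMLTerm β c z) := by
  obtain ⟨t, ht, htz⟩ : ∃ t : ℝ, 1 ≤ t ∧ ∀ i, 2 * m * ‖z i‖ ≤ t ^ β i :=
    ((Filter.eventually_ge_atTop 1).and (Filter.eventually_all.2 fun i =>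
      (tendsto_rpow_atTop (hβ i)).eventually_ge_atTop _)).exists
  have hq (i : Fin m) : m * ‖z i‖ / t ^ β i < 1 := by
    have := Real.rpow_pos_of_pos (by linarith : (0 : ℝ) < t) (β i)
    rw [div_lt_one this]
    linarith [htz i, norm_nonneg (z i), (by positivity : (0 : ℝ) ≤ m * ‖z i‖)]
  refine Summable.of_norm_bounded (Summable.mul_left _ ?_) (norm_mMLTerm_le β c z hβ hc ht)
  exact summable_fin_prod_of_nonneg (fun i k => by positivity)
    fun i => summable_geometric_of_lt_one (by positivity) (hq i)

lemma succ_mul_mMLTerm_add_single (i : Fin m) (l : Fin m → ℕ) :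
    ((l i + 1 : ℕ) : ℂ) * mMLTerm β c z (l + Pi.single i 1) =
      ((∑ j, l j + 1 : ℕ) : ℂ) * (z i * mMLTerm β (c + β i) z l) := by
  have hM := congrArg (Nat.cast (R := ℂ)) (Nat.succ_mul_multinomial_add_single (mem_univ i) l)
  push_cast at hM
  have hsum : c + ∑ j, β j * ((l + Pi.single i 1 : Fin m → ℕ) j : ℝ) =
      c + β i + ∑ j, β j * l j := by
    simp only [Pi.add_apply, Pi.single_apply, Nat.cast_add, Nat.cast_ite, Nat.cast_one,
      CharP.cast_eq_zero, mul_add, mul_ite, mul_one, mul_zero, sum_add_distrib, sum_ite_eq',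
      mem_univ, ↓reduceIte]
    ring
  have hprod : ∏ j, z j ^ (l + Pi.single i 1 : Fin m → ℕ) j = z i * ∏ j, z j ^ l j := by
    simp only [Pi.add_apply, pow_add, prod_mul_distrib, Pi.single_apply, pow_ite, pow_one, pow_zero,
      prod_ite_eq', mem_univ, if_true, mul_comm]
  simp only [mMLTerm, hsum, hprod]
  set G := Complex.Gamma ((c + β i + ∑ j, β j * l j : ℝ) : ℂ)
  push_cast
  linear_combination (z i * (∏ j, z j ^ l j) / G) * hM

-- At `l = 0` the weight `l i / |l|` is `0 / 0 = 0`.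
noncomputable def mMLShare (i : Fin m) (l : Fin m → ℕ) : ℂ :=
  (l i : ℂ) / (∑ j, l j : ℕ) * mMLTerm β c z l

lemma sum_mMLShare (l : Fin m → ℕ) :
    ∑ i, mMLShare β c z i l = if l = 0 then 0 else mMLTerm β c z l := by
  split_ifs with hl
  · simp [mMLShare, hl]
  · have hne : ((∑ j, l j : ℕ) : ℂ) ≠ 0 := by
      obtain ⟨i, hi⟩ := Function.ne_iff.1 hl
      exact Nat.cast_ne_zero.2
        (sum_pos' (fun j _ => Nat.zero_le _) ⟨i, mem_univ i, Nat.pos_of_ne_zero hi⟩).ne'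
    simp only [mMLShare]
    rw [← sum_mul, ← sum_div, ← Nat.cast_sum, div_self hne, one_mul]

lemma mMLShare_add_single (i : Fin m) (l : Fin m → ℕ) :
    mMLShare β c z i (l + Pi.single i 1) = z i * mMLTerm β (c + β i) z l := by
  have hsum : ∑ j, (l + Pi.single i 1 : Fin m → ℕ) j = ∑ j, l j + 1 := by
    simp [sum_add_distrib]
  have hne : ((∑ j, l j + 1 : ℕ) : ℂ) ≠ 0 := Nat.cast_ne_zero.2 (Nat.succ_ne_zero _)
  rw [mMLShare, hsum, div_mul_eq_mul_div, div_eq_iff hne, mul_comm (z i * _)]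
  simpa using succ_mul_mMLTerm_add_single β c z i l

lemma mMLShare_eq_zero_of_notMem_range {i : Fin m} {l : Fin m → ℕ}
    (hl : l ∉ Set.range fun l' : Fin m → ℕ => l' + Pi.single i 1) :
    mMLShare β c z i l = 0 := by
  suffices l i = 0 by simp [mMLShare, this]
  by_contra hi
  refine hl ⟨l - Pi.single i 1, funext fun j => ?_⟩
  rcases eq_or_ne j i with rfl | hj
  · simp; omega
  · simp [hj]

lemma hasSum_mMLShare (i : Fin m) (h : Summable (mMLTerm β (c + β i) z)) :
    HasSum (mMLShare β c z i) (z i * mML m β (c + β i) z) := by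
  rw [← (add_left_injective _).hasSum_iff fun l hl => mMLShare_eq_zero_of_notMem_range β c z hl]
  simpa [Function.comp_def, mMLShare_add_single, mML_eq_tsum_mMLTerm] using h.hasSum.mul_left (z i)

end MittagLefflerSeries

theorem stmt_15 (m : ℕ) (β : Fin m → ℝ) (hβ : ∀ i, 0 < β i ∧ β i < 1)
    (β₀ : ℝ) (hβ₀ : 0 < β₀) (z : Fin m → ℂ) :
    1 / Complex.Gamma (β₀ : ℂ) + ∑ i, z i * mML m β (β₀ + β i) z = mML m β β₀ z := by
  have hβpos (i : Fin m) : 0 < β i := (hβ i).1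
  have hshares := hasSum_sum fun i (_ : i ∈ univ) => hasSum_mMLShare β β₀ z i <|
    summable_mMLTerm β (β₀ + β i) z hβpos (add_pos hβ₀ (hβpos i))
  simp only [sum_mMLShare] at hshares
  rw [mML_eq_tsum_mMLTerm, (summable_mMLTerm β β₀ z hβpos hβ₀).tsum_eq_add_tsum_ite 0,
    mMLTerm_zero, ← hshares.tsum_eq]
end

section
/- Let α ∈ (0,1) and let u: [0,T] → ℝ be twice continuously differentiable. For a uniform partition t_j = jτ, τ = T/K, define the L1 approximation D_τ^α u(t_{n+1}) = (1/Γ(2-α)) Σ_{j=0}^{n} d_{α,j} (u(t_{n+1-j}) - u(t_{n-j}))/τ^α with d_{α,j} = (j+1)^{1-α} - j^{1-α}. Then the Caputo derivative ∂_t^α u(t_{n+1}) = (1/Γ(1-α)) ∫_0^{t_{n+1}} (t_{n+1}-s)^{-α} u'(s) ds satisfies |∂_t^α u(t_{n+1}) - D_τ^α u(t_{n+1})| ≤ C (max_{[0,T]} |u''|) τ^{2-α}, with C depending only on α. -/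
/-!
Split the Caputo integral at the grid points. On `[t_j, t_{j+1}]` the L1 scheme integrates the
kernel `w(s) = (t_{n+1} - s)^{-α}` exactly against the difference quotient `δ_j` of `u`, so the
error is `Γ(1-α)⁻¹ ∑_j ∫ w (u' - δ_j)`, where `|u' - δ_j| ≤ M τ` by the mean value theorem. On the
last interval, `∫ w = τ^{1-α}/(1-α)` gives `M τ^{2-α}/(1-α)`. On the others `u' - δ_j` has mean
zero, so `w` may be replaced by `w - w(t_{j+1})`, which is at most `w(t_{j+1}) - w(t_j)` because `w`
is increasing; these increments telescope to at most `w(t_n) = τ^{-α}`, giving `M τ^{2-α}` in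
total. Hence `C = (2-α)/Γ(2-α)` works.
-/

open Set intervalIntegral MeasureTheory Real

theorem abs_deriv_sub_slope_le {u : ℝ → ℝ} {a b M : ℝ} (hab : a < b)
    (hu : Differentiable ℝ u) (hu' : Differentiable ℝ (deriv u))
    (hM : ∀ s ∈ Icc a b, |deriv (deriv u) s| ≤ M) {s : ℝ} (hs : s ∈ Icc a b) :
    |deriv u s - slope u a b| ≤ M * (b - a) := by
  obtain ⟨ξ, hξ, hslope⟩ :=
    exists_deriv_eq_slope' u hab hu.continuous.continuousOn hu.differentiableOn
  have hM0 : 0 ≤ M := (abs_nonneg _).trans (hM a (left_mem_Icc.mpr hab.le))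
  rw [← hslope]
  calc |deriv u s - deriv u ξ| ≤ M * |s - ξ| :=
        (convex_Icc a b).norm_image_sub_le_of_norm_deriv_le (fun x _ => hu' x) hM
          (Ioo_subset_Icc_self hξ) hs
    _ ≤ M * (b - a) := by
        gcongr
        rw [abs_le]
        constructor <;> linarith [hs.1, hs.2, hξ.1, hξ.2]

theorem integral_deriv_sub_slope {u : ℝ → ℝ} (hu : Differentiable ℝ u)
    (hu' : Continuous (deriv u)) (a b : ℝ) :
    ∫ s in a..b, (deriv u s - slope u a b) = 0 := by
  rw [integral_sub (hu'.intervalIntegrable _ _) intervalIntegrable_const,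
    integral_deriv_eq_sub (fun x _ => hu x) (hu'.intervalIntegrable _ _),
    intervalIntegral.integral_const, sub_smul_slope, vsub_eq_sub, sub_self]

theorem abs_integral_mul_le_of_monotoneOn {w g : ℝ → ℝ} {a b E : ℝ} (hab : a ≤ b)
    (hw : MonotoneOn w (Icc a b)) (hg : ContinuousOn g (Icc a b))
    (hg0 : ∫ s in a..b, g s = 0) (hgE : ∀ s ∈ Icc a b, |g s| ≤ E) :
    |∫ s in a..b, w s * g s| ≤ (w b - w a) * E * (b - a) := by
  have hwg : IntervalIntegrable (fun s => w s * g s) volume a b :=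
    ((uIcc_of_le hab ▸ hw).intervalIntegrable).mul_continuousOn (by rwa [uIcc_of_le hab])
  have hgi : IntervalIntegrable g volume a b := hg.intervalIntegrable_of_Icc hab
  have hshift : ∫ s in a..b, w s * g s = ∫ s in a..b, (w s - w b) * g s := by
    simp only [sub_mul]
    rw [integral_sub hwg (hgi.const_mul _), intervalIntegral.integral_const_mul, hg0, mul_zero,
      sub_zero]
  rw [hshift, ← abs_of_nonneg (sub_nonneg.mpr hab), ← Real.norm_eq_abs]
  refine intervalIntegral.norm_integral_le_of_norm_le_const fun s hs => ?_
  rw [uIoc_of_le hab] at hs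
  have hs' := Ioc_subset_Icc_self hs
  have hws : |w s - w b| ≤ w b - w a := by
    rw [abs_sub_comm, abs_of_nonneg (sub_nonneg.mpr (hw hs' (right_mem_Icc.mpr hab) hs'.2))]
    linarith [hw (left_mem_Icc.mpr hab) hs' hs'.1]
  rw [Real.norm_eq_abs, abs_mul]
  exact mul_le_mul hws (hgE s hs') (abs_nonneg _) ((abs_nonneg _).trans hws)

theorem abs_sum_integral_mul_le_of_monotoneOn {w : ℝ → ℝ} {g : ℕ → ℝ → ℝ} {t : ℕ → ℝ}
    {n : ℕ} {E h : ℝ} (ht : Monotone t) (hw : MonotoneOn w (Icc (t 0) (t n)))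
    (hg : ∀ j < n, ContinuousOn (g j) (Icc (t j) (t (j + 1))))
    (hg0 : ∀ j < n, ∫ s in t j..t (j + 1), g j s = 0)
    (hgE : ∀ j < n, ∀ s ∈ Icc (t j) (t (j + 1)), |g j s| ≤ E)
    (hh : ∀ j < n, t (j + 1) - t j ≤ h) :
    |∑ j ∈ Finset.range n, ∫ s in t j..t (j + 1), w s * g j s|
      ≤ (w (t n) - w (t 0)) * E * h := by
  calc _ ≤ ∑ j ∈ Finset.range n, (w (t (j + 1)) - w (t j)) * E * h :=
        (Finset.abs_sum_le_sum_abs _ _).trans (Finset.sum_le_sum fun j hj => ?_)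
    _ = _ := by rw [← Finset.sum_mul, ← Finset.sum_mul, Finset.sum_range_sub (fun j => w (t j))]
  replace hj := Finset.mem_range.mp hj
  have htj : t j ≤ t (j + 1) := ht j.le_succ
  have hsub : Icc (t j) (t (j + 1)) ⊆ Icc (t 0) (t n) := Icc_subset_Icc (ht j.zero_le) (ht hj)
  have hE : 0 ≤ E := (abs_nonneg _).trans (hgE j hj _ (left_mem_Icc.mpr htj))
  have hwj : w (t j) ≤ w (t (j + 1)) :=
    hw (hsub (left_mem_Icc.mpr htj)) (hsub (right_mem_Icc.mpr htj)) htj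
  exact (abs_integral_mul_le_of_monotoneOn htj (hw.mono hsub) (hg j hj) (hg0 j hj)
    (hgE j hj)).trans (mul_le_mul_of_nonneg_left (hh j hj) (mul_nonneg (sub_nonneg.mpr hwj) hE))

theorem abs_integral_mul_le_of_nonneg {w g : ℝ → ℝ} {a b E : ℝ} (hab : a ≤ b)
    (hw0 : ∀ s ∈ Ioc a b, 0 ≤ w s) (hw : IntervalIntegrable w volume a b)
    (hgE : ∀ s ∈ Ioc a b, |g s| ≤ E) :
    |∫ s in a..b, w s * g s| ≤ E * ∫ s in a..b, w s := by
  rw [← intervalIntegral.integral_const_mul, ← Real.norm_eq_abs]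
  refine norm_integral_le_of_norm_le hab (ae_of_all _ fun s hs => ?_) (hw.const_mul E)
  rw [Real.norm_eq_abs, abs_mul, abs_of_nonneg (hw0 s hs), mul_comm E]
  exact mul_le_mul_of_nonneg_left (hgE s hs) (hw0 s hs)

theorem intervalIntegrable_sub_rpow_neg {α : ℝ} (hα : α < 1) (c a b : ℝ) :
    IntervalIntegrable (fun s => (c - s) ^ (-α)) volume a b := by
  simpa using (intervalIntegrable_rpow' (a := c - a) (b := c - b)
    (show (-1 : ℝ) < -α by linarith)).comp_sub_left c

theorem integral_sub_rpow_neg {α : ℝ} (hα : α < 1) (c a b : ℝ) :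
    ∫ s in a..b, (c - s) ^ (-α) = ((c - a) ^ (1 - α) - (c - b) ^ (1 - α)) / (1 - α) := by
  rw [intervalIntegral.integral_comp_sub_left (fun x => x ^ (-α)) c,
    integral_rpow (Or.inl (by linarith)), neg_add_eq_sub]

theorem abs_integral_sub_rpow_neg_mul_le {α : ℝ} (hα : α < 1) {g : ℝ → ℝ} {a b E : ℝ}
    (hab : a ≤ b) (hgE : ∀ s ∈ Ioc a b, |g s| ≤ E) :
    |∫ s in a..b, (b - s) ^ (-α) * g s| ≤ E * ((b - a) ^ (1 - α) / (1 - α)) := by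
  have hw : ∫ s in a..b, (b - s) ^ (-α) = (b - a) ^ (1 - α) / (1 - α) := by
    rw [integral_sub_rpow_neg hα, sub_self, zero_rpow (by linarith), sub_zero]
  rw [← hw]
  exact abs_integral_mul_le_of_nonneg hab (fun s hs => rpow_nonneg (sub_nonneg.mpr hs.2) _)
    (intervalIntegrable_sub_rpow_neg hα _ _ _) hgE

theorem monotoneOn_sub_rpow_neg {α : ℝ} (hα : 0 ≤ α) (c : ℝ) :
    MonotoneOn (fun s => (c - s) ^ (-α)) (Iio c) := fun _ _ _ hy hxy =>
  rpow_le_rpow_of_nonpos (sub_pos.mpr hy) (by linarith) (by linarith)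

theorem Gamma_two_sub {α : ℝ} (hα : α < 1) : Gamma (2 - α) = (1 - α) * Gamma (1 - α) := by
  rw [show 2 - α = (1 - α) + 1 by ring, Gamma_add_one (by linarith)]

noncomputable def caputoDeriv (α : ℝ) (u : ℝ → ℝ) (t : ℝ) : ℝ :=
  1 / Gamma (1 - α) * ∫ s in (0 : ℝ)..t, (t - s) ^ (-α) * deriv u s

/-- The L1 approximation of `caputoDeriv α u` at the grid point `t_{n+1} = (n + 1) τ`. -/
noncomputable def l1Deriv (α τ : ℝ) (u : ℝ → ℝ) (n : ℕ) : ℝ :=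
  1 / Gamma (2 - α) * ∑ j ∈ Finset.range (n + 1),
    (((j : ℝ) + 1) ^ (1 - α) - (j : ℝ) ^ (1 - α)) *
      (u ((n + 1 - j : ℕ) * τ) - u ((n - j : ℕ) * τ)) / τ ^ α

section Grid

variable {α τ : ℝ} {u : ℝ → ℝ}

theorem integral_sub_rpow_neg_grid (hα : α < 1) (hτ : 0 ≤ τ) (j m : ℕ) :
    ∫ s in (j : ℝ) * τ..(j + 1 : ℕ) * τ, ((j + m + 1 : ℕ) * τ - s) ^ (-α)
      = τ ^ (1 - α) / (1 - α) * (((m : ℝ) + 1) ^ (1 - α) - (m : ℝ) ^ (1 - α)) := by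
  rw [integral_sub_rpow_neg hα]
  push_cast
  rw [show ((j : ℝ) + m + 1) * τ - j * τ = (m + 1) * τ by ring,
    show ((j : ℝ) + m + 1) * τ - (j + 1) * τ = m * τ by ring,
    mul_rpow (by positivity) hτ, mul_rpow (by positivity) hτ]
  ring

theorem l1Deriv_eq_sum (hα : α < 1) (hτ : 0 < τ) (n : ℕ) :
    l1Deriv α τ u n = 1 / Gamma (1 - α) * ∑ j ∈ Finset.range (n + 1),
      (∫ s in (j : ℝ) * τ..(j + 1 : ℕ) * τ, ((n + 1 : ℕ) * τ - s) ^ (-α)) *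
        slope u (j * τ) ((j + 1 : ℕ) * τ) := by
  have hτα : τ ^ (1 - α) = τ / τ ^ α := by rw [rpow_sub hτ, rpow_one]
  rw [l1Deriv, ← Finset.sum_range_reflect, Finset.mul_sum, Finset.mul_sum]
  refine Finset.sum_congr rfl fun j hj => ?_
  obtain ⟨m, rfl⟩ := Nat.exists_eq_add_of_le (Nat.lt_succ_iff.mp (Finset.mem_range.mp hj))
  rw [show j + m + 1 - 1 - j = m by omega, show j + m + 1 - m = j + 1 by omega,
    show j + m - m = j by omega, integral_sub_rpow_neg_grid hα hτ.le, slope_def_field,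
    Gamma_two_sub hα, hτα]
  push_cast
  field_simp
  ring

theorem caputoDeriv_eq_sum (hα : α < 1) (hu' : Continuous (deriv u)) (τ : ℝ) (n : ℕ) :
    caputoDeriv α u ((n + 1 : ℕ) * τ) = 1 / Gamma (1 - α) * ∑ j ∈ Finset.range (n + 1),
      ∫ s in (j : ℝ) * τ..(j + 1 : ℕ) * τ, ((n + 1 : ℕ) * τ - s) ^ (-α) * deriv u s := by
  rw [caputoDeriv, sum_integral_adjacent_intervals fun k _ =>
    (intervalIntegrable_sub_rpow_neg hα _ _ _).mul_continuousOn hu'.continuousOn]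
  simp

theorem caputoDeriv_sub_l1Deriv_eq (hα : α < 1) (hτ : 0 < τ) (hu' : Continuous (deriv u))
    (n : ℕ) :
    caputoDeriv α u ((n + 1 : ℕ) * τ) - l1Deriv α τ u n =
      1 / Gamma (1 - α) * ∑ j ∈ Finset.range (n + 1),
        ∫ s in (j : ℝ) * τ..(j + 1 : ℕ) * τ, ((n + 1 : ℕ) * τ - s) ^ (-α) *
          (deriv u s - slope u (j * τ) ((j + 1 : ℕ) * τ)) := by
  rw [caputoDeriv_eq_sum hα hu', l1Deriv_eq_sum hα hτ, ← mul_sub, ← Finset.sum_sub_distrib]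
  congr 1
  refine Finset.sum_congr rfl fun j _ => ?_
  simp only [mul_sub]
  rw [integral_sub ((intervalIntegrable_sub_rpow_neg hα _ _ _).mul_continuousOn hu'.continuousOn)
    ((intervalIntegrable_sub_rpow_neg hα _ _ _).mul_const _), intervalIntegral.integral_mul_const]

theorem abs_caputoDeriv_sub_l1Deriv_le (hα0 : 0 ≤ α) (hα1 : α < 1) (hτ : 0 < τ)
    (hu : Differentiable ℝ u) (hu' : Differentiable ℝ (deriv u)) {M : ℝ} (n : ℕ)
    (hM : ∀ s ∈ Icc 0 ((n + 1 : ℕ) * τ), |deriv (deriv u) s| ≤ M) :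
    |caputoDeriv α u ((n + 1 : ℕ) * τ) - l1Deriv α τ u n|
      ≤ (2 - α) / Gamma (2 - α) * M * τ ^ (2 - α) := by
  rw [caputoDeriv_sub_l1Deriv_eq hα1 hτ hu'.continuous, Finset.sum_range_succ]
  set c : ℝ := (n + 1 : ℕ) * τ
  set w : ℝ → ℝ := fun s => (c - s) ^ (-α)
  set g : ℕ → ℝ → ℝ := fun j s => deriv u s - slope u (j * τ) ((j + 1 : ℕ) * τ)
  have hstep : ∀ j : ℕ, ((j + 1 : ℕ) : ℝ) * τ - j * τ = τ := fun j => by push_cast; ring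
  have hM0 : 0 ≤ M := (abs_nonneg _).trans (hM 0 ⟨le_rfl, by positivity⟩)
  have hgM : ∀ j ≤ n, ∀ s ∈ Icc ((j : ℝ) * τ) ((j + 1 : ℕ) * τ), |g j s| ≤ M * τ := by
    intro j hj s hs
    have hjc : ((j + 1 : ℕ) : ℝ) * τ ≤ c :=
      mul_le_mul_of_nonneg_right (by exact_mod_cast Nat.succ_le_succ hj) hτ.le
    have := abs_deriv_sub_slope_le (by linarith [hstep j]) hu hu'
      (fun x hx => hM x ⟨(by positivity : (0 : ℝ) ≤ j * τ).trans hx.1, hx.2.trans hjc⟩) hs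
    rwa [hstep j] at this
  have hcn : c - n * τ = τ := hstep n
  have hlast : |∫ s in (n : ℝ) * τ..c, w s * g n s| ≤ M * τ * (τ ^ (1 - α) / (1 - α)) := by
    have := abs_integral_sub_rpow_neg_mul_le hα1 (a := n * τ) (by linarith)
      fun s hs => hgM n le_rfl s (Ioc_subset_Icc_self hs)
    rwa [hcn] at this
  have hsum : |∑ j ∈ Finset.range n, ∫ s in (j : ℝ) * τ..(j + 1 : ℕ) * τ, w s * g j s|
      ≤ τ ^ (-α) * (M * τ) * τ := by
    have hnc : (n : ℝ) * τ < c := mul_lt_mul_of_pos_right (by exact_mod_cast n.lt_succ_self) hτ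
    refine (abs_sum_integral_mul_le_of_monotoneOn (t := fun j : ℕ => (j : ℝ) * τ)
      (fun i j hij => mul_le_mul_of_nonneg_right (by exact_mod_cast hij) hτ.le)
      ((monotoneOn_sub_rpow_neg hα0 c).mono fun s hs => hs.2.trans_lt hnc)
      (fun j _ => hu'.continuous.continuousOn.sub continuousOn_const)
      (fun j _ => integral_deriv_sub_slope hu hu'.continuous _ _)
      (fun j hj => hgM j hj.le) (fun j _ => (hstep j).le)).trans ?_
    gcongr
    simp only [hcn, Nat.cast_zero, zero_mul, sub_zero]
    linarith [rpow_nonneg (show (0 : ℝ) ≤ c by positivity) (-α)]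
  have h1α : 1 - α ≠ 0 := by linarith
  rw [abs_mul, abs_of_pos (one_div_pos.mpr (Gamma_pos_of_pos (by linarith)))]
  calc _ ≤ 1 / Gamma (1 - α) * (τ ^ (-α) * (M * τ) * τ + M * τ * (τ ^ (1 - α) / (1 - α))) := by
        gcongr
        exact (abs_add_le _ _).trans (add_le_add hsum hlast)
    _ = (2 - α) / Gamma (2 - α) * M * τ ^ (2 - α) := by
        rw [Gamma_two_sub hα1,
          show τ ^ (-α) = τ ^ (2 - α) / τ ^ 2 by rw [← rpow_natCast, ← rpow_sub hτ]; norm_num,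
          show τ ^ (1 - α) = τ ^ (2 - α) / τ by rw [← rpow_sub_one hτ.ne']; ring_nf]
        field_simp
        ring

end Grid

theorem stmt_16 (α : ℝ) (hα0 : 0 < α) (hα1 : α < 1) :
    ∃ C : ℝ, 0 < C ∧
      ∀ (T : ℝ) (K : ℕ) (u : ℝ → ℝ) (M : ℝ), 0 < T → 0 < K →
        ContDiff ℝ 2 u →
        (∀ s ∈ Icc (0 : ℝ) T, |iteratedDeriv 2 u s| ≤ M) →
        ∀ n : ℕ, n + 1 ≤ K →
          let τ := T / K
          let t : ℕ → ℝ := fun j => j * τ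
          |(1 / Real.Gamma (1 - α)) *
              (∫ s in (0 : ℝ)..t (n + 1), (t (n + 1) - s) ^ (-α) * deriv u s)
            - (1 / Real.Gamma (2 - α)) *
              (∑ j ∈ Finset.range (n + 1),
                (((j : ℝ) + 1) ^ (1 - α) - (j : ℝ) ^ (1 - α)) *
                  (u (t (n + 1 - j)) - u (t (n - j))) / τ ^ α)|
          ≤ C * M * τ ^ (2 - α) := by
  refine ⟨(2 - α) / Gamma (2 - α), div_pos (by linarith) (Gamma_pos_of_pos (by linarith)), ?_⟩
  intro T K u M hT hK hu hM n hn τ t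
  have hτ : 0 < τ := div_pos hT (Nat.cast_pos.mpr hK)
  have hgrid : ((n + 1 : ℕ) : ℝ) * τ ≤ T := by
    calc ((n + 1 : ℕ) : ℝ) * τ ≤ K * τ := by gcongr
      _ = T := mul_div_cancel₀ T (Nat.cast_ne_zero.mpr hK.ne')
  have hu' : Differentiable ℝ (deriv u) := by
    simpa using hu.differentiable_iteratedDeriv 1 (by norm_num)
  refine abs_caputoDeriv_sub_l1Deriv_le hα0.le hα1 hτ (hu.differentiable (by norm_num)) hu' n
    fun s hs => ?_
  simpa [show (2 : ℕ) = 1 + 1 from rfl, iteratedDeriv_succ] using hM s ⟨hs.1, hs.2.trans hgrid⟩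
end
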